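/- Let (G,v₀,W) be a Banach–Mazur game on a finite graph and let P be a reasonable probability measure on Paths(G,v₀). If Player 0 has a move-counting winning strategy for (G,v₀,W), then P(W) = 1. -/

import Mathlib

open MeasureTheory
open scoped ENNReal NNReal

namespace BMGame

variable {V : Type*}

/-- The prefix of length `n` of the infinite sequence `ρ`. -/
def pref (ρ : ℕ → V) (n : ℕ) : List V := (List.range n).map ρ

/-- `ρ` is an infinite path of the graph `E` starting at `v₀`. -/
def IsPlay (E : V → V → Prop) (v₀ : V) (ρ : ℕ → V) : Prop :=
  ρ 0 = v₀ ∧ ∀ n, E (ρ n) (ρ (n + 1))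

/-- `π` is a nonempty finite path of the graph `E` starting at `v₀` (a position of the game). -/
def IsPos (E : V → V → Prop) (v₀ : V) (π : List V) : Prop :=
  π.head? = some v₀ ∧ π.Chain' E

/-- A strategy for player 0 assigns to each position the (nonempty) block of vertices
appended by player 0's move; `(π ++ f π).Chain' E` says that this block is a path
starting at the last vertex of `π`. -/
def IsStrategy (E : V → V → Prop) (v₀ : V) (f : List V → List V) : Prop :=
  ∀ π, IsPos E v₀ π → f π ≠ [] ∧ (π ++ f π).Chain' E

/-- The play `ρ` is consistent with the strategy `f`: there are cut points
`c 0, c 1, …` (the lengths of the prefixes built after each move of player 1) such that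
after each such prefix player 0 plays according to `f`, and player 1 then appends a
nonempty block. -/
def ConsGen (f : List V → List V) (ρ : ℕ → V) : Prop :=
  ∃ c : ℕ → ℕ, 1 ≤ c 0 ∧ ∀ i,
    pref ρ (c i + (f (pref ρ (c i))).length) = pref ρ (c i) ++ f (pref ρ (c i)) ∧
    c i + (f (pref ρ (c i))).length < c (i + 1)

/-- `f` is a winning strategy for player 0 in the Banach–Mazur game `(E, v₀, W)`. -/
def WinningStrategy (E : V → V → Prop) (v₀ : V) (W : Set (ℕ → V))
    (f : List V → List V) : Prop :=
  IsStrategy E v₀ f ∧ ∀ ρ, IsPlay E v₀ ρ → ConsGen f ρ → ρ ∈ W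

/-- The strategy `f` is `b`-bounded: each of its moves has length at most `b`. -/
def BoundedBy (E : V → V → Prop) (v₀ : V) (b : ℕ) (f : List V → List V) : Prop :=
  ∀ π, IsPos E v₀ π → (f π).length ≤ b

/-- A positional strategy assigns to each vertex the nonempty block appended. -/
def IsPositional (E : V → V → Prop) (f : V → List V) : Prop :=
  ∀ v, f v ≠ [] ∧ (v :: f v).Chain' E

/-- Consistency with a positional strategy: after each prefix chosen by player 1,
player 0 plays `f` of the current (last) vertex. -/
def ConsPositional (f : V → List V) (ρ : ℕ → V) : Prop :=
  ∃ c : ℕ → ℕ, 1 ≤ c 0 ∧ ∀ i,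
    pref ρ (c i + (f (ρ (c i - 1))).length) = pref ρ (c i) ++ f (ρ (c i - 1)) ∧
    c i + (f (ρ (c i - 1))).length < c (i + 1)

def PositionalWinning (E : V → V → Prop) (v₀ : V) (W : Set (ℕ → V)) (f : V → List V) : Prop :=
  IsPositional E f ∧ ∀ ρ, IsPlay E v₀ ρ → ConsPositional f ρ → ρ ∈ W

/-- Structural requirement shared by move-counting and length-counting strategies:
for `n ≥ 1`, `h v n` is a nonempty block forming a path from `v`. -/
def IsCountingStrategy (E : V → V → Prop) (h : V → ℕ → List V) : Prop :=
  ∀ v n, 1 ≤ n → h v n ≠ [] ∧ (v :: h v n).Chain' E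

/-- Consistency with a move-counting strategy: at its `i`-th move (`i ≥ 1`) player 0 plays
`h (current vertex) i`. -/
def ConsMoveCounting (h : V → ℕ → List V) (ρ : ℕ → V) : Prop :=
  ∃ c : ℕ → ℕ, 1 ≤ c 0 ∧ ∀ i,
    pref ρ (c i + (h (ρ (c i - 1)) (i + 1)).length) = pref ρ (c i) ++ h (ρ (c i - 1)) (i + 1) ∧
    c i + (h (ρ (c i - 1)) (i + 1)).length < c (i + 1)

def MoveCountingWinning (E : V → V → Prop) (v₀ : V) (W : Set (ℕ → V))
    (h : V → ℕ → List V) : Prop :=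
  IsCountingStrategy E h ∧ ∀ ρ, IsPlay E v₀ ρ → ConsMoveCounting h ρ → ρ ∈ W

/-- Consistency with a length-counting strategy: after a prefix of length `c i`
player 0 plays `h (current vertex) (c i)`. -/
def ConsLengthCounting (h : V → ℕ → List V) (ρ : ℕ → V) : Prop :=
  ∃ c : ℕ → ℕ, 1 ≤ c 0 ∧ ∀ i,
    pref ρ (c i + (h (ρ (c i - 1)) (c i)).length) = pref ρ (c i) ++ h (ρ (c i - 1)) (c i) ∧
    c i + (h (ρ (c i - 1)) (c i)).length < c (i + 1)

def LengthCountingWinning (E : V → V → Prop) (v₀ : V) (W : Set (ℕ → V))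
    (h : V → ℕ → List V) : Prop :=
  IsCountingStrategy E h ∧ ∀ ρ, IsPlay E v₀ ρ → ConsLengthCounting h ρ → ρ ∈ W

/-- The segment `ρ a, ρ (a+1), …, ρ (b-1)` of an infinite sequence. -/
def seg (ρ : ℕ → V) (a b : ℕ) : List V := (List.range (b - a)).map fun j => ρ (a + j)

/-- A last-move strategy is defined on all nonempty finite paths of the graph. -/
def IsLastMove (E : V → V → Prop) (g : List V → List V) : Prop :=
  ∀ π, π ≠ [] → π.Chain' E → g π ≠ [] ∧ (π ++ g π).Chain' E

/-- Consistency with the last-move strategy `g`: the play decomposes as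
`π₁ g(π₁) π₂ g(π₂) ⋯` where the `πᵢ` are the (nonempty) moves of player 1. -/
def ConsLastMove (g : List V → List V) (ρ : ℕ → V) : Prop :=
  ∃ s e : ℕ → ℕ, s 0 = 0 ∧ (∀ i, s i < e i) ∧ ∀ i,
    seg ρ (e i) (e i + (g (seg ρ (s i) (e i))).length) = g (seg ρ (s i) (e i)) ∧
    s (i + 1) = e i + (g (seg ρ (s i) (e i))).length

def LastMoveWinning (E : V → V → Prop) (v₀ : V) (W : Set (ℕ → V)) (g : List V → List V) : Prop :=
  IsLastMove E g ∧ ∀ ρ, IsPlay E v₀ ρ → ConsLastMove g ρ → ρ ∈ W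

/-- The cylinder generated by the finite word `π`. -/
def Cyl (π : List V) : Set (ℕ → V) := {ρ | pref ρ π.length = π}

/-- One-step transition probabilities obtained from the weights `w`. -/
noncomputable def transP [Fintype V] (E : V → V → Prop) (w : V → V → ℝ≥0) (u v : V) : ℝ≥0∞ := by
  classical
  exact if E u v then
    (w u v : ℝ≥0∞) / ∑ x ∈ Finset.univ.filter (fun x => E u x), (w u x : ℝ≥0∞)
  else 0

/-- The probability of the cylinder generated by a finite word: the product of the
one-step transition probabilities along it. -/
noncomputable def pathP [Fintype V] (E : V → V → Prop) (w : V → V → ℝ≥0) (π : List V) : ℝ≥0∞ :=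
  ((π.zip π.tail).map fun q => transP E w q.1 q.2).prod

/-- `P` is the reasonable probability measure associated with the weights `w`. -/
def IsReasonable [Fintype V] [MeasurableSpace (ℕ → V)] (E : V → V → Prop) (v₀ : V)
    (w : V → V → ℝ≥0) (P : Measure (ℕ → V)) : Prop :=
  IsProbabilityMeasure P ∧ ∀ π : List V, π.head? = some v₀ → P (Cyl π) = pathP E w π

/-- `Ps` is a legal move of player 0 in the generalised game `G_α` at position `π`: a
finite nonempty set of nonempty finite paths from the last vertex of `π` whose union of
cylinders has conditional probability at least `α` given `Cyl π`. -/
def LegalProposal [MeasurableSpace (ℕ → V)] (E : V → V → Prop) (P : Measure (ℕ → V)) (α : ℝ)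
    (π : List V) (Ps : Finset (List V)) : Prop :=
  Ps.Nonempty ∧ (∀ τ ∈ Ps, τ ≠ [] ∧ (π ++ τ).Chain' E) ∧
    ENNReal.ofReal α ≤ P (⋃ τ ∈ Ps, Cyl (π ++ τ)) / P (Cyl π)

/-- An α-strategy for player 0. -/
def IsAlphaStrategy [MeasurableSpace (ℕ → V)] (E : V → V → Prop) (v₀ : V) (P : Measure (ℕ → V))
    (α : ℝ) (f : List V → Finset (List V)) : Prop :=
  ∀ π, IsPos E v₀ π → LegalProposal E P α π (f π)

/-- Consistency with an α-strategy: at each stage, player 1 picks some element of the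
set proposed by player 0 and appends a nonempty block after it. -/
def ConsAlpha (f : List V → Finset (List V)) (ρ : ℕ → V) : Prop :=
  ∃ c : ℕ → ℕ, 1 ≤ c 0 ∧ ∀ i, ∃ τ ∈ f (pref ρ (c i)),
    pref ρ (c i + τ.length) = pref ρ (c i) ++ τ ∧ c i + τ.length < c (i + 1)

def AlphaWinning [MeasurableSpace (ℕ → V)] (E : V → V → Prop) (v₀ : V) (P : Measure (ℕ → V))
    (α : ℝ) (W : Set (ℕ → V)) (f : List V → Finset (List V)) : Prop :=
  IsAlphaStrategy E v₀ P α f ∧ ∀ ρ, IsPlay E v₀ ρ → ConsAlpha f ρ → ρ ∈ W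

/-- A strategy for player 1 in the generalised game `G_α` consists of an initial path and,
for each position together with a legal proposal of player 0, the selected element of the
proposal and the next (nonempty) block played by player 1. -/
def IsP1Strategy [MeasurableSpace (ℕ → V)] (E : V → V → Prop) (v₀ : V) (P : Measure (ℕ → V))
    (α : ℝ) (init : List V) (g : List V → Finset (List V) → List V × List V) : Prop :=
  IsPos E v₀ init ∧
    ∀ π Ps, IsPos E v₀ π → LegalProposal E P α π Ps →
      (g π Ps).1 ∈ Ps ∧ (g π Ps).2 ≠ [] ∧ (π ++ ((g π Ps).1 ++ (g π Ps).2)).Chain' E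

/-- Consistency of a play with player 1's strategy `(init, g)`:
there is a sequence of legal proposals of player 0 generating the play. -/
def ConsP1 [MeasurableSpace (ℕ → V)] (E : V → V → Prop) (P : Measure (ℕ → V)) (α : ℝ)
    (init : List V) (g : List V → Finset (List V) → List V × List V) (ρ : ℕ → V) : Prop :=
  ∃ (Ps : ℕ → Finset (List V)) (p : ℕ → List V), p 0 = init ∧
    (∀ n, pref ρ (p n).length = p n) ∧
    ∀ n, LegalProposal E P α (p n) (Ps n) ∧
      p (n + 1) = p n ++ ((g (p n) (Ps n)).1 ++ (g (p n) (Ps n)).2)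

def P1Winning [MeasurableSpace (ℕ → V)] (E : V → V → Prop) (v₀ : V) (P : Measure (ℕ → V))
    (α : ℝ) (W : Set (ℕ → V)) (init : List V)
    (g : List V → Finset (List V) → List V × List V) : Prop :=
  IsP1Strategy E v₀ P α init g ∧ ∀ ρ, IsPlay E v₀ ρ → ConsP1 E P α init g ρ → ρ ∉ W

/-- A union of cylinders, i.e. an open subset of the space of sequences. -/
def IsCylOpen (U : Set (ℕ → V)) : Prop :=
  ∃ S : Set (List V), U = ⋃ π ∈ S, Cyl π

/-- `W` is a countable intersection of open subsets of the space `Paths (G, v₀)`. -/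
def IsCountableInterOfOpens (E : V → V → Prop) (v₀ : V) (W : Set (ℕ → V)) : Prop :=
  ∃ U : ℕ → Set (ℕ → V), (∀ n, IsCylOpen (U n)) ∧
    W = {ρ | IsPlay E v₀ ρ} ∩ ⋂ n, U n

/-- For every `n`, the concatenation of the blocks `u 0, …, u (n-1)` is a prefix of `ρ`. -/
def AgreesWithBlocks (ρ : ℕ → V) (u : ℕ → List V) : Prop :=
  ∀ n, pref ρ (((List.range n).map u).flatten).length = ((List.range n).map u).flatten

end BMGame

open BMGame
/-! Fix the number `k` of a move of Player 0. Whatever the history, from the current vertex `u`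
the play follows the prescribed block `h u k` with probability at least
`ε = min_u pathP (u :: h u k) > 0`. Testing at times further apart than the longest block gives
independent trials, so almost surely, for every `k`, the block of move `k` is played infinitely
often. Along such a play the cut points of a play consistent with `h` can be chosen greedily,
so the play lies in `W`; and almost every path is a play of the graph. -/

namespace BMGame

variable {V : Type*}

section Cylinders

lemma pref_length (ρ : ℕ → V) (n : ℕ) : (pref ρ n).length = n := by
  simp [pref]

lemma pref_eq_pref_iff {ρ ρ' : ℕ → V} {n : ℕ} : pref ρ n = pref ρ' n ↔ ∀ i < n, ρ i = ρ' i := by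
  simp [pref, List.map_inj_left]

lemma pref_succ (ρ : ℕ → V) (n : ℕ) : pref ρ (n + 1) = pref ρ n ++ [ρ n] := by
  simp [pref, List.range_succ]

lemma head?_pref (ρ : ℕ → V) {n : ℕ} (hn : 1 ≤ n) : (pref ρ n).head? = some (ρ 0) := by
  obtain ⟨n, rfl⟩ := Nat.exists_eq_add_of_le' hn
  simp [pref, List.range_succ_eq_map]

lemma mem_cyl {π : List V} {ρ : ℕ → V} : ρ ∈ Cyl π ↔ pref ρ π.length = π := Iff.rfl

lemma mem_cyl_iff {π : List V} {ρ : ℕ → V} :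
    ρ ∈ Cyl π ↔ ∀ i (hi : i < π.length), ρ i = π[i] := by
  simp [Cyl, pref, List.ext_getElem_iff]

lemma mem_cyl_pref_iff {ρ ρ' : ℕ → V} {n : ℕ} : ρ' ∈ Cyl (pref ρ n) ↔ ∀ i < n, ρ' i = ρ i := by
  rw [mem_cyl, pref_length, pref_eq_pref_iff]

lemma mem_cyl_pref (ρ : ℕ → V) (n : ℕ) : ρ ∈ Cyl (pref ρ n) :=
  mem_cyl_pref_iff.2 fun _ _ => rfl

lemma cyl_append_subset (π τ : List V) : Cyl (π ++ τ) ⊆ Cyl π := by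
  intro ρ hρ
  rw [mem_cyl_iff] at hρ ⊢
  intro i hi
  rw [hρ i (by rw [List.length_append]; omega), List.getElem_append_left hi]

lemma pairwiseDisjoint_cyl_of_length_eq {n : ℕ} {S : Set (List V)} (hS : ∀ π ∈ S, π.length = n) :
    S.PairwiseDisjoint Cyl := by
  intro π hπ π' hπ' hne
  refine Set.disjoint_left.2 fun ρ h h' => hne ?_
  rw [mem_cyl, hS π hπ] at h
  rw [mem_cyl, hS π' hπ'] at h'
  exact h.symm.trans h'

lemma biUnion_cyl_pref_eq_of_dependsOn {A : Set (ℕ → V)} {n : ℕ}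
    (hA : DependsOn (· ∈ A) (Set.Iio n)) : ⋃ π ∈ (pref · n) '' A, Cyl π = A := by
  ext ρ
  simp only [Set.mem_iUnion, Set.mem_image, exists_prop]
  constructor
  · rintro ⟨_, ⟨ρ', hρ', rfl⟩, hρ⟩
    exact (hA fun i hi => (mem_cyl_pref_iff.1 hρ i hi).symm).mp hρ'
  · exact fun hρ => ⟨_, ⟨ρ, hρ, rfl⟩, mem_cyl_pref ρ n⟩

lemma measurableSet_cyl [MeasurableSpace V] [MeasurableSingletonClass V] (π : List V) :
    MeasurableSet (Cyl π) := by
  have : Cyl π = ⋂ i : Fin π.length, (fun ρ : ℕ → V => ρ i) ⁻¹' {π[i]} := by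
    ext ρ
    simp [mem_cyl_iff, Fin.forall_iff]
  rw [this]
  exact MeasurableSet.iInter fun i => measurable_pi_apply _ (measurableSet_singleton _)

lemma measure_inter_le_mul_of_dependsOn [MeasurableSpace V] [MeasurableSingletonClass V]
    [Countable V] (P : Measure (ℕ → V)) {A S : Set (ℕ → V)} {n : ℕ} {c : ℝ≥0∞}
    (hA : DependsOn (· ∈ A) (Set.Iio n))
    (hS : ∀ ρ ∈ A, P (Cyl (pref ρ n) ∩ S) ≤ c * P (Cyl (pref ρ n))) :
    P (A ∩ S) ≤ c * P A := by
  have hcount : ((pref · n) '' A).Countable := Set.to_countable _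
  have hdisj : ((pref · n) '' A).PairwiseDisjoint Cyl :=
    pairwiseDisjoint_cyl_of_length_eq (n := n) (by rintro _ ⟨ρ, -, rfl⟩; exact pref_length ρ n)
  calc P (A ∩ S) = P (⋃ π ∈ (pref · n) '' A, Cyl π ∩ S) := by
        rw [← Set.iUnion₂_inter, biUnion_cyl_pref_eq_of_dependsOn hA]
    _ ≤ ∑' π : (pref · n) '' A, P (Cyl π ∩ S) := measure_biUnion_le P hcount _
    _ ≤ ∑' π : (pref · n) '' A, c * P (Cyl π) :=
        ENNReal.tsum_le_tsum fun ⟨_, ρ, hρ, hπ⟩ => hπ ▸ hS ρ hρ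
    _ = c * P A := by
        rw [ENNReal.tsum_mul_left, ← measure_biUnion hcount hdisj fun π _ => measurableSet_cyl π,
          biUnion_cyl_pref_eq_of_dependsOn hA]

end Cylinders

section PathProbability

variable [Fintype V] (E : V → V → Prop) (w : V → V → ℝ≥0)

lemma transP_of_not {u v : V} (h : ¬ E u v) : transP E w u v = 0 := by
  simp [transP, h]

lemma transP_pos (hw : ∀ u v, E u v → 0 < w u v) {u v : V} (h : E u v) :
    0 < transP E w u v := by
  simp only [transP, h, if_true]
  exact ENNReal.div_pos (by simpa using (hw u v h).ne')
    (ENNReal.sum_lt_top.2 fun _ _ => ENNReal.coe_lt_top).ne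

@[simp] lemma pathP_nil : pathP E w [] = 1 := rfl

@[simp] lemma pathP_singleton (u : V) : pathP E w [u] = 1 := rfl

@[simp] lemma pathP_cons_cons (u v : V) (τ : List V) :
    pathP E w (u :: v :: τ) = transP E w u v * pathP E w (v :: τ) := by
  simp [pathP]

lemma pathP_append_cons (π τ : List V) (u : V) :
    pathP E w (π ++ u :: τ) = pathP E w (π ++ [u]) * pathP E w (u :: τ) := by
  induction π with
  | nil => simp
  | cons a π ih =>
    cases π with
    | nil => simp
    | cons b π => simp only [List.cons_append, pathP_cons_cons] at ih ⊢; rw [ih, mul_assoc]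

lemma pathP_pos (hw : ∀ u v, E u v → 0 < w u v) {π : List V} (hπ : π.IsChain E) :
    0 < pathP E w π := by
  induction π with
  | nil => simp
  | cons u τ ih =>
    cases τ with
    | nil => simp
    | cons v τ =>
      rw [List.isChain_cons_cons] at hπ
      rw [pathP_cons_cons]
      exact ENNReal.mul_pos (transP_pos E w hw hπ.1).ne' (ih hπ.2).ne'

lemma pathP_eq_zero_of_not_isChain {π : List V} (hπ : ¬ π.IsChain E) : pathP E w π = 0 := by
  induction π with
  | nil => simp at hπ
  | cons u τ ih =>
    cases τ with
    | nil => simp at hπ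
    | cons v τ =>
      rw [List.isChain_cons_cons, not_and_or] at hπ
      rw [pathP_cons_cons]
      rcases hπ with huv | hτ
      · rw [transP_of_not E w huv, zero_mul]
      · rw [ih hτ, mul_zero]

end PathProbability

section Matching

-- As in `ConsMoveCounting`, `ρ (t - 1)` is the current vertex after the prefix `pref ρ t`.
def MatchesAt (β : V → List V) (ρ : ℕ → V) (t : ℕ) : Prop :=
  pref ρ (t + (β (ρ (t - 1))).length) = pref ρ t ++ β (ρ (t - 1))

lemma dependsOn_matchesAt (β : V → List V) {t L : ℕ} (ht : 1 ≤ t)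
    (hL : ∀ v, (β v).length ≤ L) : DependsOn (MatchesAt β · t) (Set.Iio (t + L)) := by
  intro ρ ρ' h
  have hpref : ∀ k ≤ t + L, pref ρ k = pref ρ' k := fun k hk =>
    pref_eq_pref_iff.2 fun i hi => h i (by simp only [Set.mem_Iio]; omega)
  have hlast : ρ (t - 1) = ρ' (t - 1) := h _ (by simp only [Set.mem_Iio]; omega)
  have hlen := hL (ρ' (t - 1))
  simp only [MatchesAt, hlast, hpref t (by omega), hpref (t + (β (ρ' (t - 1))).length) (by omega)]

lemma dependsOn_forall_lt_not_matchesAt (β : V → List V) (v₀ : V) {m L : ℕ} (hm : 1 ≤ m)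
    (hL : ∀ v, (β v).length ≤ L) (J : ℕ) :
    DependsOn (· ∈ {ρ | ρ 0 = v₀ ∧ ∀ j < J, ¬ MatchesAt β ρ (m + j * L)})
      (Set.Iio (m + J * L)) := by
  intro ρ ρ' h
  have h0 : ρ 0 = ρ' 0 := h 0 (by simp only [Set.mem_Iio]; omega)
  have hmatch : ∀ j < J, MatchesAt β ρ (m + j * L) = MatchesAt β ρ' (m + j * L) := by
    intro j hj
    have : (j + 1) * L ≤ J * L := Nat.mul_le_mul_right L hj
    exact dependsOn_matchesAt β (by omega) hL fun i hi =>
      h i (by simp only [Set.mem_Iio] at hi ⊢; rw [add_mul, one_mul] at this; omega)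
  exact propext (and_congr (by rw [h0]) (forall₂_congr fun j hj => by rw [hmatch j hj]))

lemma cyl_pref_inter_matchesAt (β : V → List V) (ρ : ℕ → V) {n : ℕ} (hn : 1 ≤ n) :
    Cyl (pref ρ n) ∩ {ρ' | MatchesAt β ρ' n} = Cyl (pref ρ n ++ β (ρ (n - 1))) := by
  have key : ∀ ρ' ∈ Cyl (pref ρ n), MatchesAt β ρ' n ↔ ρ' ∈ Cyl (pref ρ n ++ β (ρ (n - 1))) := by
    intro ρ' hρ'
    have hpref : pref ρ' n = pref ρ n := by rwa [mem_cyl, pref_length] at hρ'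
    have hlast : ρ' (n - 1) = ρ (n - 1) := mem_cyl_pref_iff.1 hρ' _ (by omega)
    rw [MatchesAt, mem_cyl, List.length_append, pref_length, hpref, hlast]
  ext ρ'
  exact ⟨fun ⟨hc, hm⟩ => (key ρ' hc).1 hm,
    fun hc => ⟨cyl_append_subset _ _ hc, (key ρ' (cyl_append_subset _ _ hc)).2 hc⟩⟩

lemma consMoveCounting_of_frequently_matchesAt (h : V → ℕ → List V) (ρ : ℕ → V)
    (H : ∀ i m, ∃ t ≥ m, MatchesAt (h · (i + 1)) ρ t) : ConsMoveCounting h ρ := by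
  choose T hTge hT using H
  let c : ℕ → ℕ := fun i => Nat.rec (T 0 1)
    (fun i ci => T (i + 1) (ci + (h (ρ (ci - 1)) (i + 1)).length + 1)) i
  refine ⟨c, hTge 0 1, fun i => ⟨?_, hTge (i + 1) _⟩⟩
  cases i with
  | zero => exact hT 0 1
  | succ i => exact hT (i + 1) _

end Matching

namespace IsReasonable

variable [Fintype V] [MeasurableSpace V] [MeasurableSingletonClass V] {E : V → V → Prop}
  {v₀ : V} {w : V → V → ℝ≥0} {P : Measure (ℕ → V)}

lemma measure_not_isPlay (hP : IsReasonable E v₀ w P) : P {ρ | ¬ IsPlay E v₀ ρ} = 0 := by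
  have := hP.1
  have hcover : {ρ | ¬ IsPlay E v₀ ρ} ⊆
      (Cyl [v₀])ᶜ ∪ ⋃ (π : List V) (_ : π.head? = some v₀ ∧ ¬ π.IsChain E), Cyl π := by
    intro ρ hρ
    by_cases h0 : ρ 0 = v₀
    · obtain ⟨n, hn⟩ : ∃ n, ¬ E (ρ n) (ρ (n + 1)) := by simpa [IsPlay, h0] using hρ
      refine Or.inr (Set.mem_iUnion₂.2 ⟨pref ρ (n + 2),
        ⟨h0 ▸ head?_pref ρ (by omega), fun hc => hn ?_⟩, mem_cyl_pref ρ _⟩)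
      simpa [pref] using List.isChain_iff_getElem.1 hc n (by simp [pref_length])
    · exact Or.inl fun hc => h0 (by simpa [mem_cyl_iff] using hc)
  refine measure_mono_null hcover (measure_union_null ?_
    (measure_iUnion_null fun π => measure_iUnion_null fun hπ => ?_))
  · rw [prob_compl_eq_zero_iff (measurableSet_cyl _), hP.2 [v₀] rfl, pathP_singleton]
  · rw [hP.2 π hπ.1]
    exact pathP_eq_zero_of_not_isChain E w hπ.2

lemma measure_cyl_pref_inter_not_matchesAt (hP : IsReasonable E v₀ w P) (β : V → List V)
    {ρ : ℕ → V} (hρ : ρ 0 = v₀) {n : ℕ} (hn : 1 ≤ n) :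
    P (Cyl (pref ρ n) ∩ {ρ' | ¬ MatchesAt β ρ' n})
      = P (Cyl (pref ρ n)) * (1 - pathP E w (ρ (n - 1) :: β (ρ (n - 1)))) := by
  have := hP.1
  have hhead : (pref ρ n).head? = some v₀ := hρ ▸ head?_pref ρ hn
  have hhead' : (pref ρ n ++ β (ρ (n - 1))).head? = some v₀ := by
    simp [List.head?_append, hhead]
  have hsplit : Cyl (pref ρ n) ∩ {ρ' | ¬ MatchesAt β ρ' n}
      = Cyl (pref ρ n) \ Cyl (pref ρ n ++ β (ρ (n - 1))) := by
    rw [← cyl_pref_inter_matchesAt β ρ hn, Set.sdiff_self_inter]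
    rfl
  have hpref : pref ρ n = pref ρ (n - 1) ++ [ρ (n - 1)] := by
    rw [← pref_succ, Nat.sub_add_cancel hn]
  have hmul : pathP E w (pref ρ n ++ β (ρ (n - 1)))
      = pathP E w (pref ρ n) * pathP E w (ρ (n - 1) :: β (ρ (n - 1))) := by
    rw [hpref, List.append_assoc, List.singleton_append, pathP_append_cons E w _ (β (ρ (n - 1)))]
  have hfin : pathP E w (pref ρ n) ≠ ∞ := hP.2 _ hhead ▸ measure_ne_top P _
  rw [hsplit, measure_sdiff (cyl_append_subset _ _) (measurableSet_cyl _).nullMeasurableSet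
    (measure_ne_top P _), hP.2 _ hhead, hP.2 _ hhead', ENNReal.mul_sub fun _ _ => hfin, mul_one,
    hmul]

lemma measure_forall_lt_not_matchesAt_le (hP : IsReasonable E v₀ w P) {β : V → List V}
    {m L : ℕ} (hm : 1 ≤ m) (hL : ∀ v, (β v).length ≤ L) {ε : ℝ≥0∞}
    (hε : ∀ u, ε ≤ pathP E w (u :: β u)) (J : ℕ) :
    P {ρ | ρ 0 = v₀ ∧ ∀ j < J, ¬ MatchesAt β ρ (m + j * L)} ≤ (1 - ε) ^ J := by
  have := hP.1
  induction J with
  | zero => simpa using prob_le_one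
  | succ J ih =>
    have hsucc : {ρ | ρ 0 = v₀ ∧ ∀ j < J + 1, ¬ MatchesAt β ρ (m + j * L)}
        = {ρ | ρ 0 = v₀ ∧ ∀ j < J, ¬ MatchesAt β ρ (m + j * L)}
          ∩ {ρ | ¬ MatchesAt β ρ (m + J * L)} := by
      ext ρ
      simp only [Set.mem_inter_iff, Set.mem_ofPred_eq, Nat.lt_succ_iff_lt_or_eq, or_imp,
        forall_and, forall_eq, and_assoc]
    rw [hsucc, pow_succ']
    refine (measure_inter_le_mul_of_dependsOn P
      (dependsOn_forall_lt_not_matchesAt β v₀ hm hL J) fun ρ hρ => ?_).trans (by gcongr)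
    rw [hP.measure_cyl_pref_inter_not_matchesAt β hρ.1 (by omega), mul_comm]
    gcongr
    exact hε _

lemma measure_forall_ge_not_matchesAt (hP : IsReasonable E v₀ w P)
    (hw : ∀ u v, E u v → 0 < w u v) {β : V → List V} (hβ : ∀ v, (v :: β v).IsChain E)
    {m : ℕ} (hm : 1 ≤ m) : P {ρ | ρ 0 = v₀ ∧ ∀ t ≥ m, ¬ MatchesAt β ρ t} = 0 := by
  have : Nonempty V := ⟨v₀⟩
  set ε := Finset.univ.inf' Finset.univ_nonempty fun u => pathP E w (u :: β u)
  have hε : 0 < ε := (Finset.lt_inf'_iff _).2 fun u _ => pathP_pos E w hw (hβ u)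
  have hεle : ∀ u, ε ≤ pathP E w (u :: β u) := fun u => Finset.inf'_le _ (Finset.mem_univ u)
  have hdecay := hP.measure_forall_lt_not_matchesAt_le hm
    (fun v => Finset.le_sup (f := fun v => (β v).length) (Finset.mem_univ v)) hεle
  have hlim := ENNReal.tendsto_pow_atTop_nhds_zero_of_lt_one
    (ENNReal.sub_lt_self ENNReal.one_ne_top one_ne_zero hε.ne')
  refine le_antisymm (ge_of_tendsto' hlim fun J => (measure_mono ?_).trans (hdecay J)) zero_le
  exact fun ρ hρ => ⟨hρ.1, fun j _ => hρ.2 _ (Nat.le_add_right m _)⟩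

end IsReasonable

end BMGame

theorem stmt7_general {V : Type*} [Fintype V] [MeasurableSpace V] [DiscreteMeasurableSpace V]
    (E : V → V → Prop) (v₀ : V)
    (W : Set (ℕ → V))
    (w : V → V → ℝ≥0) (hw : ∀ u v, E u v → 0 < w u v)
    (P : MeasureTheory.Measure (ℕ → V)) (hP : IsReasonable E v₀ w P)
    (hmc : ∃ h : V → ℕ → List V, MoveCountingWinning E v₀ W h) :
    P Wᶜ = 0 := by
  obtain ⟨h, hstrat, hwin⟩ := hmc
  have hcover : Wᶜ ⊆ {ρ | ¬ IsPlay E v₀ ρ} ∪ ⋃ (i : ℕ) (m : ℕ),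
      {ρ | ρ 0 = v₀ ∧ ∀ t ≥ m + 1, ¬ MatchesAt (h · (i + 1)) ρ t} := by
    intro ρ hρW
    by_cases hρ : IsPlay E v₀ ρ
    · have hnot : ¬ ∀ i m, ∃ t ≥ m, MatchesAt (h · (i + 1)) ρ t := fun H =>
        hρW (hwin ρ hρ (consMoveCounting_of_frequently_matchesAt h ρ H))
      push Not at hnot
      obtain ⟨i, m, hm⟩ := hnot
      exact Or.inr (Set.mem_iUnion₂.2 ⟨i, m, hρ.1, fun t ht => hm t (by omega)⟩)
    · exact Or.inl hρ
  refine measure_mono_null hcover (measure_union_null hP.measure_not_isPlay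
    (measure_iUnion_null fun i => measure_iUnion_null fun m => ?_))
  exact hP.measure_forall_ge_not_matchesAt hw (fun v => (hstrat v (i + 1) (by omega)).2) (by omega)

/-- If Player 0 has a move-counting winning strategy for a Banach–Mazur game `(G, v₀, W)`
on a finite graph, then `P (W) = 1` for every reasonable probability measure `P`. -/
theorem stmt7 {V : Type*} [Fintype V] [MeasurableSpace V] [DiscreteMeasurableSpace V]
    (E : V → V → Prop) (hE : ∀ v, ∃ u, E v u) (v₀ : V)
    (W : Set (ℕ → V)) (hW : W ⊆ {ρ | IsPlay E v₀ ρ})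
    (w : V → V → ℝ≥0) (hw : ∀ u v, E u v → 0 < w u v)
    (P : MeasureTheory.Measure (ℕ → V)) (hP : IsReasonable E v₀ w P)
    (hmc : ∃ h : V → ℕ → List V, MoveCountingWinning E v₀ W h) :
    P Wᶜ = 0 :=
  stmt7_general E v₀ W w hw P hP hmc
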